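/- Upward monotone convergence: for every situation s and every pointwise non-decreasing sequence (f_n)_{n∈ℕ} of bounded below global variables f_n : Ω → ℝ̄ that converges pointwise to a global variable f : Ω → ℝ̄, one has E_V(f|s) = lim_{n→∞} E_V(f_n|s). -/

import Mathlib

open Filter Topology

noncomputable section

/-- Addition on the extended reals with the convention `(+∞) + (−∞) = (−∞) + (+∞) = +∞`. -/
def eadd (a b : EReal) : EReal := if a = ⊤ ∨ b = ⊤ then ⊤ else a + b

/-- An extended real variable is bounded below. -/
def BddBelowF {Y : Type*} (f : Y → EReal) : Prop := ∃ M : ℝ, ∀ y, (M : EReal) ≤ f y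

/-- (E1): constants are preserved. -/
def UE1 {Y : Type*} (E : (Y → EReal) → EReal) : Prop :=
  ∀ c : ℝ, E (fun _ => (c : EReal)) = (c : EReal)

/-- (E2): sub-additivity on bounded below variables. -/
def UE2 {Y : Type*} (E : (Y → EReal) → EReal) : Prop :=
  ∀ f g : Y → EReal, BddBelowF f → BddBelowF g →
    E (fun y => eadd (f y) (g y)) ≤ eadd (E f) (E g)

/-- (E3): positive homogeneity on bounded below variables. -/
def UE3 {Y : Type*} (E : (Y → EReal) → EReal) : Prop :=
  ∀ l : ℝ, 0 < l → ∀ f : Y → EReal, BddBelowF f →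
    E (fun y => (l : EReal) * f y) = (l : EReal) * E f

/-- (E4): monotonicity on bounded below variables. -/
def UE4 {Y : Type*} (E : (Y → EReal) → EReal) : Prop :=
  ∀ f g : Y → EReal, BddBelowF f → BddBelowF g → (∀ y, f y ≤ g y) → E f ≤ E g

/-- (E5): continuity with respect to non-decreasing sequences of non-negative variables. -/
def UE5 {Y : Type*} (E : (Y → EReal) → EReal) : Prop :=
  ∀ (fs : ℕ → Y → EReal) (f : Y → EReal),
    (∀ n y, 0 ≤ fs n y) → (∀ n y, fs n y ≤ fs (n + 1) y) →
    (∀ y, Tendsto (fun n => fs n y) atTop (𝓝 (f y))) →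
    Tendsto (fun n => E (fs n)) atTop (𝓝 (E f))

/-- An upper expectation: a map satisfying (E1)–(E5). -/
def IsUpperExpectation {Y : Type*} (E : (Y → EReal) → EReal) : Prop :=
  UE1 E ∧ UE2 E ∧ UE3 E ∧ UE4 E ∧ UE5 E

/-- The situation formed by the first `n` states of the path `ω`. -/
def pfx {X : Type*} (ω : ℕ → X) (n : ℕ) : List X := List.ofFn (fun i : Fin n => ω i)

/-- The cylinder event of all paths that go through the situation `s`. -/
def Gamma {X : Type*} (s : List X) : Set (ℕ → X) := {ω | pfx ω s.length = s}

/-- A process is bounded below. -/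
def BddBelowP {X : Type*} (M : List X → EReal) : Prop := ∃ B : ℝ, ∀ t, (B : EReal) ≤ M t

/-- A supermartingale for the imprecise probabilities tree `Q`. -/
def IsSupermartingale {X : Type*} (Q : List X → (X → EReal) → EReal)
    (M : List X → EReal) : Prop :=
  ∀ s : List X, Q s (fun x => M (s ++ [x])) ≤ M s

/-- The pathwise limit inferior of a process. -/
def liminfP {X : Type*} (M : List X → EReal) (ω : ℕ → X) : EReal :=
  Filter.liminf (fun n => M (pfx ω n)) atTop

/-- The game-theoretic upper expectation `E_V(f | s)`. -/
def upExp {X : Type*} (Q : List X → (X → EReal) → EReal)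
    (f : (ℕ → X) → EReal) (s : List X) : EReal :=
  sInf {x : EReal | ∃ M : List X → EReal, IsSupermartingale Q M ∧ BddBelowP M ∧
    (∀ ω ∈ Gamma s, f ω ≤ liminfP M ω) ∧ M s = x}

/-- An event `A` is strictly almost sure within `Γ(s)`: some `s`-test supermartingale
converges to `+∞` on every path of `Γ(s)` outside `A`. -/
def StrictlyAS {X : Type*} (Q : List X → (X → EReal) → EReal) (s : List X)
    (A : Set (ℕ → X)) : Prop :=
  ∃ T : List X → EReal, IsSupermartingale Q T ∧ (∀ t, 0 ≤ T t) ∧ T s = 1 ∧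
    ∀ ω ∈ Gamma s, ω ∉ A → Tendsto (fun n => T (pfx ω n)) atTop (𝓝 (⊤ : EReal))

/-- An `n`-measurable global variable only depends on the first `n` states. -/
def NMeasurable {X : Type*} (n : ℕ) (f : (ℕ → X) → EReal) : Prop :=
  ∀ ω ω' : ℕ → X, pfx ω n = pfx ω' n → f ω = f ω'

/-- A finitary global variable is `n`-measurable for some `n`. -/
def Finitary {X : Type*} (f : (ℕ → X) → EReal) : Prop := ∃ n : ℕ, NMeasurable n f

/-- The bounded below global variables that are pointwise limits of finitary variables. -/
def VbLim {X : Type*} : Set ((ℕ → X) → EReal) :=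
  {f | BddBelowF f ∧ ∃ gs : ℕ → (ℕ → X) → EReal, (∀ n, Finitary (gs n)) ∧
    ∀ ω, Tendsto (fun n => gs n ω) atTop (𝓝 (f ω))}

/-!
Adding a constant reduces the claim to non-negative `fₙ`, and there only
`E_V(f | s) ≤ ⨆ₙ E_V(fₙ | s)` needs proof. The processes `Vₙ t := E_V(fₙ | t)` are
supermartingales, and by (E5) so is `W := ⨆ₙ Vₙ`. A Lévy-type argument shows that
`fₙ ≤ liminf Vₙ` strictly almost surely: on a path where `liminf Vₙ < a < b < fₙ`, a gambler
who invests in a witness of `Vₙ t < a` whenever this happens and cashes in once that witness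
exceeds `b` multiplies the capital by `(1 + b / a) / 2 > 1` infinitely often. Countably many
such test supermartingales `T` combine into one, so `W + ε T` superhedges `f` for every `ε > 0`.
-/

namespace EReal

lemma le_of_forall_pos_le_add {x y : EReal} (h : ∀ ε : ℝ, 0 < ε → x ≤ y + ε) : x ≤ y := by
  induction y using EReal.rec with
  | bot => simpa using h 1 one_pos
  | coe r =>
    refine le_of_forall_lt_iff_le.1 fun z hz => ?_
    have := h (z - r) (_root_.sub_pos.2 (EReal.coe_lt_coe_iff.1 hz))
    rwa [← coe_add, add_sub_cancel] at this
  | top => exact le_top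

def addCoeOrderIso (c : ℝ) : EReal ≃o EReal where
  toFun x := x + c
  invFun x := x - c
  left_inv _ := add_sub_cancel_right
  right_inv _ := sub_add_cancel
  map_rel_iff' := (addLECancellable_coe c).add_le_add_iff_right

@[simp]
lemma addCoeOrderIso_apply (c : ℝ) (x : EReal) : addCoeOrderIso c x = x + c := rfl

@[simp]
lemma addCoeOrderIso_symm_apply (c : ℝ) (x : EReal) : (addCoeOrderIso c).symm x = x - c := rfl

lemma coe_finset_sum {ι : Type*} (s : Finset ι) (w : ι → ℝ) :
    ((∑ i ∈ s, w i : ℝ) : EReal) = ∑ i ∈ s, (w i : EReal) :=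
  map_sum (⟨⟨(↑), coe_zero⟩, coe_add⟩ : ℝ →+ EReal) w s

end EReal

lemma eadd_eq_add {a b : EReal} (ha : a ≠ ⊥) (hb : b ≠ ⊥) : eadd a b = a + b := by
  unfold eadd
  split_ifs with h
  · rcases h with rfl | rfl
    · exact (EReal.top_add_of_ne_bot hb).symm
    · exact (EReal.add_top_of_ne_bot ha).symm
  · rfl

lemma BddBelowF.of_nonneg {Y : Type*} {f : Y → EReal} (hf : ∀ y, 0 ≤ f y) : BddBelowF f :=
  ⟨0, by exact_mod_cast hf⟩

namespace IsUpperExpectation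

variable {Y : Type*} {E : (Y → EReal) → EReal} (hE : IsUpperExpectation E)
include hE

lemma map_const (c : ℝ) : E (fun _ => (c : EReal)) = c := hE.1 c

lemma mono {f g : Y → EReal} (hf : BddBelowF f) (hg : BddBelowF g) (h : ∀ y, f y ≤ g y) :
    E f ≤ E g :=
  hE.2.2.2.1 f g hf hg h

lemma const_le {g : Y → EReal} {c : ℝ} (h : ∀ y, (c : EReal) ≤ g y) : (c : EReal) ≤ E g :=
  hE.map_const c ▸ hE.mono ⟨c, fun _ => le_rfl⟩ ⟨c, h⟩ h

lemma ne_bot {g : Y → EReal} (hg : BddBelowF g) : E g ≠ ⊥ :=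
  let ⟨_, hB⟩ := hg
  ne_bot_of_le_ne_bot (EReal.coe_ne_bot _) (hE.const_le hB)

lemma add_le {f g : Y → EReal} (hf : BddBelowF f) (hg : BddBelowF g) :
    E (fun y => f y + g y) ≤ E f + E g := by
  have key := hE.2.1 f g hf hg
  obtain ⟨Bf, hBf⟩ := hf
  obtain ⟨Bg, hBg⟩ := hg
  rwa [eadd_eq_add (hE.ne_bot ⟨Bf, hBf⟩) (hE.ne_bot ⟨Bg, hBg⟩),
    funext fun y => eadd_eq_add (ne_bot_of_le_ne_bot (EReal.coe_ne_bot _) (hBf y))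
      (ne_bot_of_le_ne_bot (EReal.coe_ne_bot _) (hBg y))] at key

lemma add_const_le {g : Y → EReal} (hg : BddBelowF g) (c : ℝ) :
    E (fun y => g y + c) ≤ E g + c := by
  simpa only [hE.map_const] using hE.add_le hg ⟨c, fun _ => le_rfl⟩

lemma const_mul {l : ℝ} (hl : 0 < l) {g : Y → EReal} (hg : BddBelowF g) :
    E (fun y => l * g y) = l * E g :=
  hE.2.2.1 l hl g hg

lemma tendsto_of_monotone {fs : ℕ → Y → EReal} {f : Y → EReal} (h0 : ∀ n y, 0 ≤ fs n y)
    (hmono : ∀ n y, fs n y ≤ fs (n + 1) y) (hf : ∀ y, Tendsto (fun n => fs n y) atTop (𝓝 (f y))) :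
    Tendsto (fun n => E (fs n)) atTop (𝓝 (E f)) :=
  hE.2.2.2.2 fs f h0 hmono hf

end IsUpperExpectation

section Paths

variable {X : Type*}

@[simp]
lemma length_pfx (ω : ℕ → X) (n : ℕ) : (pfx ω n).length = n := by
  simp [pfx]

lemma pfx_succ (ω : ℕ → X) (n : ℕ) : pfx ω (n + 1) = pfx ω n ++ [ω n] := by
  unfold pfx
  rw [List.ofFn_succ']
  simp [List.concat_eq_append]

lemma pfx_prefix_pfx (ω : ℕ → X) {m n : ℕ} (h : m ≤ n) : pfx ω m <+: pfx ω n := by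
  induction n, h using Nat.le_induction with
  | base => exact List.prefix_rfl
  | succ n _ ih => exact ih.trans (pfx_succ ω n ▸ List.prefix_append _ _)

lemma mem_Gamma_pfx (ω : ℕ → X) (n : ℕ) : ω ∈ Gamma (pfx ω n) := by
  simp [Gamma]

lemma prefix_pfx_of_mem_Gamma {s : List X} {ω : ℕ → X} (hω : ω ∈ Gamma s) {n : ℕ}
    (hn : s.length ≤ n) : s <+: pfx ω n :=
  hω ▸ pfx_prefix_pfx ω hn

lemma Gamma_anti {s t : List X} (h : s <+: t) : Gamma t ⊆ Gamma s := fun ω hω => by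
  have hst : pfx ω s.length <+: t := (hω : pfx ω t.length = t) ▸ pfx_prefix_pfx ω h.length_le
  exact (List.prefix_of_prefix_length_le hst h (by simp)).eq_of_length (by simp)

/-- The path through `t` that continues from every later situation `v` with the state
`next v`. -/
def followPath (t : List X) (next : List X → X) (i : ℕ) : X :=
  if h : i < t.length then t[i] else next (List.ofFn fun j : Fin i => followPath t next j)
decreasing_by exact j.2

lemma followPath_mem_Gamma (t : List X) (next : List X → X) :
    followPath t next ∈ Gamma t := by
  refine List.ext_getElem (by simp) fun i hi _ => ?_
  simp only [pfx, List.getElem_ofFn]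
  rw [followPath, dif_pos (by simpa using hi)]

lemma pfx_followPath_succ (t : List X) (next : List X → X) {n : ℕ} (hn : t.length ≤ n) :
    pfx (followPath t next) (n + 1) =
      pfx (followPath t next) n ++ [next (pfx (followPath t next) n)] := by
  rw [pfx_succ, followPath, dif_neg (by omega)]
  rfl

end Paths

lemma BddBelowP.children {X : Type*} {M : List X → EReal} (hM : BddBelowP M) (t : List X) :
    BddBelowF fun x => M (t ++ [x]) :=
  let ⟨B, hB⟩ := hM
  ⟨B, fun _ => hB _⟩

lemma BddBelowP.of_nonneg {X : Type*} {M : List X → EReal} (hM : ∀ t, 0 ≤ M t) : BddBelowP M :=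
  ⟨0, by exact_mod_cast hM⟩

section Supermartingale

variable {X : Type*} {Q : List X → (X → EReal) → EReal} {M N : List X → EReal}

lemma isSupermartingale_const (hQ : ∀ s, IsUpperExpectation (Q s)) (c : ℝ) :
    IsSupermartingale Q fun _ => (c : EReal) :=
  fun t => ((hQ t).map_const c).le

namespace IsSupermartingale

lemma add (hQ : ∀ s, IsUpperExpectation (Q s)) (hM : IsSupermartingale Q M)
    (hN : IsSupermartingale Q N) (hMb : BddBelowP M) (hNb : BddBelowP N) :
    IsSupermartingale Q fun t => M t + N t := fun t =>
  ((hQ t).add_le (hMb.children t) (hNb.children t)).trans (add_le_add (hM t) (hN t))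

lemma add_const (hQ : ∀ s, IsUpperExpectation (Q s)) (hM : IsSupermartingale Q M)
    (hMb : BddBelowP M) (c : ℝ) : IsSupermartingale Q fun t => M t + c :=
  hM.add hQ (isSupermartingale_const hQ c) hMb ⟨c, fun _ => le_rfl⟩

lemma const_mul (hQ : ∀ s, IsUpperExpectation (Q s)) (hM : IsSupermartingale Q M)
    (hMb : BddBelowP M) {l : ℝ} (hl : 0 < l) : IsSupermartingale Q fun t => l * M t := fun t => by
  rw [(hQ t).const_mul hl (hMb.children t)]
  exact mul_le_mul_of_nonneg_left (hM t) (by exact_mod_cast hl.le)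

lemma exists_le_child [Fintype X] [Nonempty X] (hQ : ∀ s, IsUpperExpectation (Q s))
    (hM : IsSupermartingale Q M) (t : List X) :
    ∃ x, M (t ++ [x]) ≤ M t := by
  by_contra! hlt
  have hmin : M t < Finset.univ.inf' Finset.univ_nonempty fun x => M (t ++ [x]) :=
    (Finset.lt_inf'_iff _).2 fun x _ => hlt x
  obtain ⟨r, hr, hrmin⟩ := EReal.exists_between_coe_real hmin
  have hrQ : (r : EReal) ≤ Q t fun x => M (t ++ [x]) :=
    (hQ t).const_le fun x => hrmin.le.trans (Finset.inf'_le _ (Finset.mem_univ x))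
  exact (hr.trans_le (hrQ.trans (hM t))).false

lemma exists_liminfP_le [Fintype X] [Nonempty X] (hQ : ∀ s, IsUpperExpectation (Q s))
    (hM : IsSupermartingale Q M) (t : List X) :
    ∃ ω ∈ Gamma t, liminfP M ω ≤ M t := by
  choose next hnext using hM.exists_le_child hQ
  refine ⟨followPath t next, followPath_mem_Gamma t next,
    liminf_le_of_frequently_le' (frequently_atTop.2 fun N => ⟨t.length + N, by omega, ?_⟩)⟩
  induction N with
  | zero => rw [add_zero, followPath_mem_Gamma t next]
  | succ N ih =>
    rw [← add_assoc, pfx_followPath_succ t next (by omega)]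
    exact (hnext _).trans ih

end IsSupermartingale

lemma isSupermartingale_iSup (hQ : ∀ s, IsUpperExpectation (Q s)) {Ms : ℕ → List X → EReal}
    (hsm : ∀ n, IsSupermartingale Q (Ms n)) (h0 : ∀ n t, 0 ≤ Ms n t)
    (hmono : ∀ n t, Ms n t ≤ Ms (n + 1) t) : IsSupermartingale Q fun t => ⨆ n, Ms n t := by
  intro t
  have hlim := (hQ t).tendsto_of_monotone (fun n x => h0 n (t ++ [x])) (fun n x => hmono n _)
    fun x => tendsto_atTop_iSup (monotone_nat_of_le_succ fun n => hmono n (t ++ [x]))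
  exact le_of_tendsto hlim (Eventually.of_forall fun n => (hsm n t).trans (le_iSup (Ms · t) n))

end Supermartingale

section UpperExpectation

variable {X : Type*} {Q : List X → (X → EReal) → EReal}

lemma upExp_le_of_witness {f : (ℕ → X) → EReal} {s : List X} {M : List X → EReal}
    (hM : IsSupermartingale Q M) (hMb : BddBelowP M)
    (hlim : ∀ ω ∈ Gamma s, f ω ≤ liminfP M ω) : upExp Q f s ≤ M s :=
  sInf_le ⟨M, hM, hMb, hlim, rfl⟩

lemma exists_witness_of_upExp_lt {f : (ℕ → X) → EReal} {t : List X} {c : EReal}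
    (h : upExp Q f t < c) :
    ∃ M, IsSupermartingale Q M ∧ BddBelowP M ∧ (∀ ω ∈ Gamma t, f ω ≤ liminfP M ω) ∧ M t < c := by
  obtain ⟨_, ⟨M, hM, hMb, hlim, rfl⟩, hlt⟩ := sInf_lt_iff.1 h
  exact ⟨M, hM, hMb, hlim, hlt⟩

lemma upExp_mono {f g : (ℕ → X) → EReal} {s : List X} (h : ∀ ω ∈ Gamma s, f ω ≤ g ω) :
    upExp Q f s ≤ upExp Q g s :=
  sInf_le_sInf fun _ ⟨M, hM, hMb, hlim, hMs⟩ =>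
    ⟨M, hM, hMb, fun ω hω => (h ω hω).trans (hlim ω hω), hMs⟩

variable (hQ : ∀ s, IsUpperExpectation (Q s))
include hQ

lemma upExp_add_const_le (f : (ℕ → X) → EReal) (c : ℝ) (s : List X) :
    upExp Q (fun ω => f ω + c) s ≤ upExp Q f s + c := by
  rw [← EReal.addCoeOrderIso_apply]
  conv_rhs => rw [upExp, map_sInf]
  refine le_sInf ?_
  rintro _ ⟨_, ⟨M, hM, hMb, hlim, rfl⟩, rfl⟩
  obtain ⟨B, hB⟩ := hMb
  refine upExp_le_of_witness (hM.add_const hQ ⟨B, hB⟩ c)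
    ⟨B + c, fun t => by rw [EReal.coe_add]; exact add_le_add_left (hB t) _⟩ fun ω hω => ?_
  simp only [liminfP, ← EReal.addCoeOrderIso_apply, ← (EReal.addCoeOrderIso c).liminf_apply]
  exact (EReal.addCoeOrderIso c).monotone (hlim ω hω)

lemma upExp_add_const (f : (ℕ → X) → EReal) (c : ℝ) (s : List X) :
    upExp Q (fun ω => f ω + c) s = upExp Q f s + c := by
  refine (upExp_add_const_le hQ f c s).antisymm ((EReal.addCoeOrderIso c).le_symm_apply.1 ?_)
  simpa [← sub_eq_add_neg, EReal.add_sub_cancel_right] using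
    upExp_add_const_le hQ (fun ω => f ω + c) (-c) s

variable [Fintype X] [Nonempty X]

lemma upExp_nonneg {f : (ℕ → X) → EReal} {t : List X} (hf : ∀ ω ∈ Gamma t, 0 ≤ f ω) :
    0 ≤ upExp Q f t := by
  refine le_sInf ?_
  rintro _ ⟨M, hM, -, hlim, rfl⟩
  obtain ⟨ω, hω, hle⟩ := hM.exists_liminfP_le hQ t
  exact (hf ω hω).trans ((hlim ω hω).trans hle)

lemma isSupermartingale_upExp {f : (ℕ → X) → EReal} (hf : ∀ ω, 0 ≤ f ω) :
    IsSupermartingale Q (upExp Q f) := by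
  intro t
  refine le_sInf ?_
  rintro _ ⟨M, hM, hMb, hlim, rfl⟩
  refine ((hQ t).mono (BddBelowF.of_nonneg fun x => upExp_nonneg hQ fun ω _ => hf ω)
    (hMb.children t) fun x => upExp_le_of_witness hM hMb fun ω hω => ?_).trans (hM t)
  exact hlim ω (Gamma_anti (List.prefix_append _ _) hω)

end UpperExpectation

section StrictlyAlmostSure

variable {X : Type*} {Q : List X → (X → EReal) → EReal} (hQ : ∀ s, IsUpperExpectation (Q s))

include hQ in
lemma isSupermartingale_finset_sum {ι : Type*} (I : Finset ι) {M : ι → List X → EReal}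
    (hM : ∀ i, IsSupermartingale Q (M i)) (hM0 : ∀ i t, 0 ≤ M i t) :
    IsSupermartingale Q fun t => ∑ i ∈ I, M i t := by
  induction I using Finset.cons_induction with
  | empty => simpa using isSupermartingale_const hQ 0
  | cons i I _ ih =>
    simp only [Finset.sum_cons]
    exact (hM i).add hQ ih (.of_nonneg (hM0 i)) (.of_nonneg fun t => Finset.sum_nonneg
      fun j _ => hM0 j t)

lemma StrictlyAS.mono {s : List X} {A B : Set (ℕ → X)} (h : StrictlyAS Q s A) (hAB : A ⊆ B) :
    StrictlyAS Q s B :=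
  let ⟨T, hT, hT0, hTs, hTtop⟩ := h
  ⟨T, hT, hT0, hTs, fun ω hω hωB => hTtop ω hω fun hωA => hωB (hAB hωA)⟩

include hQ in
lemma strictlyAS_univ (s : List X) : StrictlyAS Q s Set.univ :=
  ⟨fun _ => (1 : ℝ), isSupermartingale_const hQ 1, fun _ => by simp, rfl,
    fun _ _ h => absurd trivial h⟩

include hQ in
lemma StrictlyAS.iInter_nat {s : List X} {A : ℕ → Set (ℕ → X)}
    (h : ∀ j, StrictlyAS Q s (A j)) : StrictlyAS Q s (⋂ j, A j) := by
  choose T hT hT0 hTs hTtop using h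
  set w : ℕ → ℝ := fun j => 1 / 2 / 2 ^ j
  have hw : ∀ j, 0 < w j := fun j => by positivity
  set S : ℕ → List X → EReal := fun N t => ∑ j ∈ Finset.range N, (w j : EReal) * T j t
  have hwT0 : ∀ j t, 0 ≤ (w j : EReal) * T j t := fun j t =>
    mul_nonneg (by exact_mod_cast (hw j).le) (hT0 j t)
  have hS0 : ∀ N t, 0 ≤ S N t := fun N t => Finset.sum_nonneg fun j _ => hwT0 j t
  have hS_mono : ∀ t, Monotone (S · t) := fun t => monotone_nat_of_le_succ fun N => by
    simpa [S, Finset.sum_range_succ] using le_add_of_nonneg_right (hwT0 N t)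
  refine ⟨fun t => ⨆ N, S N t, isSupermartingale_iSup hQ
    (fun N => isSupermartingale_finset_sum hQ _
      (fun j => (hT j).const_mul hQ (.of_nonneg (hT0 j)) (hw j)) hwT0)
    hS0 (fun N t => hS_mono t N.le_succ), fun t => le_iSup_of_le 0 (hS0 0 t), ?_, ?_⟩
  · have hSs : ∀ N, S N s = ((∑ j ∈ Finset.range N, w j : ℝ) : EReal) := fun N => by
      simp [S, hTs, EReal.coe_finset_sum]
    refine tendsto_nhds_unique (tendsto_atTop_iSup (hS_mono s)) ?_
    rw [funext hSs, ← EReal.coe_one]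
    exact (continuous_coe_real_ereal.tendsto 1).comp (hasSum_geometric_two' 1).tendsto_sum_nat
  · intro ω hω hωA
    obtain ⟨j, hj⟩ : ∃ j, ω ∉ A j := by simpa using hωA
    have hwTj := EReal.Tendsto.const_mul (a := (w j : EReal)) (hTtop j ω hω hj)
      (.inl (EReal.coe_ne_bot _)) (.inl (EReal.coe_ne_top _))
    rw [EReal.coe_mul_top_of_pos (hw j)] at hwTj
    refine tendsto_nhds_top_mono hwTj (Eventually.of_forall fun n => le_iSup_of_le (j + 1) ?_)
    exact Finset.single_le_sum (fun i _ => hwT0 i _) (Finset.self_mem_range_succ j)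

include hQ in
lemma StrictlyAS.iInter {ι : Type*} [Countable ι] {s : List X} {A : ι → Set (ℕ → X)}
    (h : ∀ i, StrictlyAS Q s (A i)) : StrictlyAS Q s (⋂ i, A i) := by
  cases isEmpty_or_nonempty ι with
  | inl _ => simpa using strictlyAS_univ hQ s
  | inr _ =>
    obtain ⟨e, he⟩ := exists_surjective_nat ι
    exact he.iInter_comp A ▸ StrictlyAS.iInter_nat hQ fun j => h (e j)

include hQ in
lemma upExp_le_of_strictlyAS {f : (ℕ → X) → EReal} {s : List X} {A : Set (ℕ → X)}
    (hA : StrictlyAS Q s A) {M : List X → EReal} (hM : IsSupermartingale Q M)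
    (hMb : BddBelowP M) (hlim : ∀ ω ∈ Gamma s, ω ∈ A → f ω ≤ liminfP M ω) :
    upExp Q f s ≤ M s := by
  obtain ⟨T, hT, hT0, hTs, hTtop⟩ := hA
  obtain ⟨B, hB⟩ := hMb
  refine EReal.le_of_forall_pos_le_add fun ε hε => ?_
  have hεT0 : ∀ t, 0 ≤ (ε : EReal) * T t := fun t =>
    mul_nonneg (by exact_mod_cast hε.le) (hT0 t)
  have hle := upExp_le_of_witness (f := f) (s := s)
    (hM.add hQ (hT.const_mul hQ (.of_nonneg hT0) hε) ⟨B, hB⟩ (.of_nonneg hεT0))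
    ⟨B, fun t => (hB t).trans (le_add_of_nonneg_right (hεT0 t))⟩ fun ω hω => ?_
  · simpa [hTs] using hle
  have hMω : (B : EReal) ≤ liminfP M ω := le_liminf_of_le (by isBoundedDefault)
    (Eventually.of_forall fun n => hB _)
  refine le_trans ?_ (EReal.le_liminf_add (u := fun n => M (pfx ω n))
    (v := fun n => (ε : EReal) * T (pfx ω n)))
  by_cases hωA : ω ∈ A
  · refine (hlim ω hω hωA).trans (le_add_of_nonneg_right (le_liminf_of_le (by isBoundedDefault)
      (Eventually.of_forall fun n => hεT0 _)))
  · have htop := EReal.Tendsto.const_mul (a := (ε : EReal)) (hTtop ω hω hωA)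
      (.inl (EReal.coe_ne_bot _)) (.inl (EReal.coe_ne_top _))
    rw [EReal.coe_mul_top_of_pos hε] at htop
    rw [htop.liminf_eq, ← liminfP,
      EReal.add_top_of_ne_bot (ne_bot_of_le_ne_bot (EReal.coe_ne_bot B) hMω)]
    exact le_top

end StrictlyAlmostSure

section Witness

variable {X : Type*} {Q : List X → (X → EReal) → EReal} {g : (ℕ → X) → EReal} {a : ℝ}

open scoped Classical in
def extendByTop (u : List X) (M : List X → EReal) (t : List X) : EReal :=
  if u <+: t then M t else ⊤

lemma extendByTop_of_prefix {u t : List X} (M : List X → EReal) (h : u <+: t) :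
    extendByTop u M t = M t :=
  if_pos h

lemma IsSupermartingale.extendByTop {u : List X} {M : List X → EReal}
    (hM : IsSupermartingale Q M) : IsSupermartingale Q (extendByTop u M) := by
  intro t
  by_cases h : u <+: t
  · simpa only [extendByTop_of_prefix M h,
      fun x => extendByTop_of_prefix M (h.trans (List.prefix_append t [x]))] using hM t
  · have htop : _root_.extendByTop u M t = ⊤ := if_neg h
    exact htop ▸ le_top

lemma liminfP_extendByTop {u : List X} (M : List X → EReal) {ω : ℕ → X} (hω : ω ∈ Gamma u) :
    liminfP (extendByTop u M) ω = liminfP M ω :=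
  liminf_congr (eventually_atTop.2 ⟨u.length, fun _ hn =>
    extendByTop_of_prefix M (prefix_pfx_of_mem_Gamma hω hn)⟩)

lemma extendByTop_nonneg [Fintype X] [Nonempty X] (hQ : ∀ s, IsUpperExpectation (Q s))
    {u : List X} {M : List X → EReal} (hM : IsSupermartingale Q M) {f : (ℕ → X) → EReal}
    (hf : ∀ ω ∈ Gamma u, 0 ≤ f ω) (hlim : ∀ ω ∈ Gamma u, f ω ≤ liminfP M ω) (t : List X) :
    0 ≤ extendByTop u M t := by
  by_cases h : u <+: t
  · obtain ⟨ω, hω, hle⟩ := hM.exists_liminfP_le hQ t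
    rw [extendByTop_of_prefix M h]
    have hωu := Gamma_anti h hω
    exact (hf ω hωu).trans ((hlim ω hωu).trans hle)
  · simp [extendByTop, h]

open scoped Classical in
def witnessBelow (Q : List X → (X → EReal) → EReal) (g : (ℕ → X) → EReal) (a : ℝ)
    (u : List X) : List X → EReal :=
  if h : upExp Q g u < a then extendByTop u (exists_witness_of_upExp_lt h).choose
  else fun _ => 0

lemma isSupermartingale_witnessBelow (hQ : ∀ s, IsUpperExpectation (Q s)) (u : List X) :
    IsSupermartingale Q (witnessBelow Q g a u) := by
  unfold witnessBelow
  split_ifs with h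
  · exact (exists_witness_of_upExp_lt h).choose_spec.1.extendByTop
  · simpa using isSupermartingale_const hQ 0

lemma witnessBelow_nonneg [Fintype X] [Nonempty X] (hQ : ∀ s, IsUpperExpectation (Q s))
    (hg : ∀ ω, 0 ≤ g ω) (u t : List X) : 0 ≤ witnessBelow Q g a u t := by
  unfold witnessBelow
  split_ifs with h
  · obtain ⟨hM, -, hlim, -⟩ := (exists_witness_of_upExp_lt h).choose_spec
    exact extendByTop_nonneg hQ hM (fun ω _ => hg ω) hlim t
  · exact le_rfl

lemma witnessBelow_self_le {u : List X} (h : upExp Q g u < a) : witnessBelow Q g a u u ≤ a := by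
  rw [witnessBelow, dif_pos h, extendByTop_of_prefix _ List.prefix_rfl]
  exact (exists_witness_of_upExp_lt h).choose_spec.2.2.2.le

lemma le_liminfP_witnessBelow {u : List X} (h : upExp Q g u < a) {ω : ℕ → X}
    (hω : ω ∈ Gamma u) : g ω ≤ liminfP (witnessBelow Q g a u) ω := by
  rw [witnessBelow, dif_pos h, liminfP_extendByTop _ hω]
  exact (exists_witness_of_upExp_lt h).choose_spec.2.2.1 ω hω

end Witness

section Upcrossing

variable {X : Type*} {Q : List X → (X → EReal) → EReal} {g : (ℕ → X) → EReal} {a b : ℝ}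

/-- The state of a gambler betting on upcrossings of `[a, b]` by `upExp Q g` along a path:
`m` rounds are completed, and in state `active m u` the capital is invested in
`witnessBelow Q g a u`. -/
inductive UpcrossingState (X : Type*) where
  | idle (m : ℕ)
  | active (m : ℕ) (u : List X)

def UpcrossingState.rounds : UpcrossingState X → ℕ
  | .idle m => m
  | .active m _ => m

open scoped Classical in
def upcrossingStep (Q : List X → (X → EReal) → EReal) (g : (ℕ → X) → EReal) (a b : ℝ) :
    UpcrossingState X → List X → UpcrossingState X
  | .idle m, t => if upExp Q g t < a then .active m t else .idle m
  | .active m u, t => if (b : EReal) ≤ witnessBelow Q g a u t then .idle (m + 1) else .active m u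

open scoped Classical in
def upcrossingState (Q : List X → (X → EReal) → EReal) (g : (ℕ → X) → EReal) (a b : ℝ)
    (s t : List X) : UpcrossingState X :=
  if _h : s <+: t ∧ s.length < t.length then
    upcrossingStep Q g a b (upcrossingState Q g a b s t.dropLast) t
  else .idle 0
termination_by t.length
decreasing_by simp only [List.length_dropLast]; omega

def upcrossingFactor (a b : ℝ) : ℝ := (1 + b / a) / 2

/-- With `ρ = upcrossingFactor a b`: half of the capital `ρ ^ m` is kept, the other half buys
`ρ ^ m / (2 * a)` units of a witness costing at most `a`; once the witness is worth `b`, the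
capital is `ρ ^ (m + 1)`. -/
def upcrossingBet (a b : ℝ) (m : ℕ) (x : EReal) : EReal :=
  ((upcrossingFactor a b ^ m / (2 * a) : ℝ) : EReal) * x +
    ((upcrossingFactor a b ^ m / 2 : ℝ) : EReal)

def upcrossingCapital (Q : List X → (X → EReal) → EReal) (g : (ℕ → X) → EReal) (a b : ℝ) :
    UpcrossingState X → List X → EReal
  | .idle m, _ => ((upcrossingFactor a b ^ m : ℝ) : EReal)
  | .active m u, t => upcrossingBet a b m (witnessBelow Q g a u t)

open scoped Classical in
def upcrossingTest (Q : List X → (X → EReal) → EReal) (g : (ℕ → X) → EReal) (a b : ℝ)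
    (s t : List X) : EReal :=
  if s <+: t then upcrossingCapital Q g a b (upcrossingState Q g a b s t) t else ⊤

lemma one_lt_upcrossingFactor (ha : 0 < a) (hab : a < b) : 1 < upcrossingFactor a b := by
  have : 1 < b / a := (one_lt_div ha).2 hab
  unfold upcrossingFactor
  linarith

lemma upcrossingBet_mono (ha : 0 < a) (hab : a < b) (m : ℕ) {x y : EReal} (h : x ≤ y) :
    upcrossingBet a b m x ≤ upcrossingBet a b m y := by
  have := (one_lt_upcrossingFactor ha hab).le
  unfold upcrossingBet
  gcongr

lemma upcrossingBet_coe (m : ℕ) (x : ℝ) : upcrossingBet a b m x =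
    ((upcrossingFactor a b ^ m / (2 * a) * x + upcrossingFactor a b ^ m / 2 : ℝ) : EReal) := by
  simp [upcrossingBet, EReal.coe_add, EReal.coe_mul]

lemma upcrossingBet_lower (ha : 0 < a) (m : ℕ) :
    upcrossingBet a b m a = (upcrossingFactor a b ^ m : ℝ) := by
  rw [upcrossingBet_coe]
  congr 1
  field_simp
  ring

lemma upcrossingBet_upper (ha : 0 < a) (m : ℕ) :
    upcrossingBet a b m b = (upcrossingFactor a b ^ (m + 1) : ℝ) := by
  rw [upcrossingBet_coe, pow_succ]
  congr 1
  generalize upcrossingFactor a b ^ m = r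
  unfold upcrossingFactor
  field_simp
  ring

lemma half_le_upcrossingBet (ha : 0 < a) (hab : a < b) (m : ℕ) {x : EReal} (hx : 0 ≤ x) :
    ((upcrossingFactor a b ^ m / 2 : ℝ) : EReal) ≤ upcrossingBet a b m x := by
  have h0 : upcrossingBet a b m 0 = ((upcrossingFactor a b ^ m / 2 : ℝ) : EReal) := by
    simp [upcrossingBet]
  exact h0 ▸ upcrossingBet_mono ha hab m hx

lemma upcrossingState_self (s : List X) : upcrossingState Q g a b s s = .idle 0 := by
  rw [upcrossingState, dif_neg fun h => h.2.false]

lemma upcrossingState_append {s t : List X} (h : s <+: t) (x : X) :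
    upcrossingState Q g a b s (t ++ [x]) =
      upcrossingStep Q g a b (upcrossingState Q g a b s t) (t ++ [x]) := by
  rw [upcrossingState, dif_pos ⟨h.trans (List.prefix_append t [x]), by simp [h.length_le]⟩,
    List.dropLast_concat]

lemma rounds_le_rounds_upcrossingStep (st : UpcrossingState X) (t : List X) :
    st.rounds ≤ (upcrossingStep Q g a b st t).rounds := by
  cases st <;> simp only [upcrossingStep] <;> split_ifs <;> simp [UpcrossingState.rounds]

lemma upcrossingStep_eq_active {st : UpcrossingState X} {t u : List X} {m : ℕ}
    (h : upcrossingStep Q g a b st t = .active m u) :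
    st = .active m u ∨ (u = t ∧ upExp Q g t < a) := by
  cases st <;> simp only [upcrossingStep] at h <;> split_ifs at h with hc <;> cases h <;> simp [hc]

lemma upcrossingStep_idle_of_lt {t : List X} (m : ℕ) (h : upExp Q g t < a) :
    upcrossingStep Q g a b (.idle m) t = .active m t :=
  if_pos h

lemma upcrossingStep_active_of_le {t u : List X} (m : ℕ)
    (h : (b : EReal) ≤ witnessBelow Q g a u t) :
    upcrossingStep Q g a b (.active m u) t = .idle (m + 1) :=
  if_pos h

lemma upcrossingCapital_step_le (ha : 0 < a) (hab : a < b) (st : UpcrossingState X)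
    (t : List X) :
    upcrossingCapital Q g a b (upcrossingStep Q g a b st t) t ≤ upcrossingCapital Q g a b st t := by
  cases st with
  | idle m =>
    simp only [upcrossingStep]
    split_ifs with h
    · exact (upcrossingBet_mono ha hab m (witnessBelow_self_le h)).trans_eq
        (upcrossingBet_lower ha m)
    · exact le_rfl
  | active m u =>
    simp only [upcrossingStep]
    split_ifs with h
    · exact (upcrossingBet_upper ha m).symm.trans_le (upcrossingBet_mono ha hab m h)
    · exact le_rfl

section

variable [Fintype X] [Nonempty X] (hQ : ∀ s, IsUpperExpectation (Q s)) (hg : ∀ ω, 0 ≤ g ω)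
  (ha : 0 < a) (hab : a < b)
include hQ hg ha hab

lemma half_le_upcrossingCapital (st : UpcrossingState X) (t : List X) :
    ((upcrossingFactor a b ^ st.rounds / 2 : ℝ) : EReal) ≤ upcrossingCapital Q g a b st t := by
  have hρ := (one_lt_upcrossingFactor ha hab).le
  cases st with
  | idle m =>
    simp only [UpcrossingState.rounds, upcrossingCapital]
    exact_mod_cast half_le_self (by positivity : 0 ≤ upcrossingFactor a b ^ m)
  | active m u => exact half_le_upcrossingBet ha hab m (witnessBelow_nonneg hQ hg u t)

lemma upcrossingCapital_nonneg (st : UpcrossingState X) (t : List X) :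
    0 ≤ upcrossingCapital Q g a b st t := by
  have hρ := (one_lt_upcrossingFactor ha hab).le
  exact le_trans (by exact_mod_cast (by positivity)) (half_le_upcrossingCapital hQ hg ha hab st t)

lemma upcrossingCapital_children_le (st : UpcrossingState X) (t : List X) :
    Q t (fun x => upcrossingCapital Q g a b st (t ++ [x])) ≤ upcrossingCapital Q g a b st t := by
  have hρ := (one_lt_upcrossingFactor ha hab).le
  cases st with
  | idle m => exact ((hQ t).map_const _).le
  | active m u =>
    have hW0 := witnessBelow_nonneg (a := a) hQ hg u
    have hc : 0 < upcrossingFactor a b ^ m / (2 * a) := by positivity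
    calc Q t (fun x => upcrossingBet a b m (witnessBelow Q g a u (t ++ [x])))
        ≤ upcrossingBet a b m (Q t fun x => witnessBelow Q g a u (t ++ [x])) := by
          refine ((hQ t).add_const_le (.of_nonneg fun x => ?_) _).trans_eq ?_
          · exact mul_nonneg (by exact_mod_cast hc.le) (hW0 _)
          · rw [(hQ t).const_mul hc (.of_nonneg fun x => hW0 _), upcrossingBet]
      _ ≤ upcrossingBet a b m (witnessBelow Q g a u t) :=
          upcrossingBet_mono ha hab m (isSupermartingale_witnessBelow hQ u t)

lemma upcrossingTest_nonneg (s t : List X) : 0 ≤ upcrossingTest Q g a b s t := by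
  unfold upcrossingTest
  split_ifs
  · exact upcrossingCapital_nonneg hQ hg ha hab _ t
  · exact le_top

lemma isSupermartingale_upcrossingTest (s : List X) :
    IsSupermartingale Q (upcrossingTest Q g a b s) := by
  intro t
  by_cases hst : s <+: t
  · have hchild : ∀ x, upcrossingTest Q g a b s (t ++ [x]) ≤
        upcrossingCapital Q g a b (upcrossingState Q g a b s t) (t ++ [x]) := fun x => by
      rw [upcrossingTest, if_pos (hst.trans (List.prefix_append t [x])),
        upcrossingState_append hst]
      exact upcrossingCapital_step_le ha hab _ _
    calc Q t (fun x => upcrossingTest Q g a b s (t ++ [x]))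
        ≤ Q t (fun x => upcrossingCapital Q g a b (upcrossingState Q g a b s t) (t ++ [x])) :=
          (hQ t).mono (.of_nonneg fun x => upcrossingTest_nonneg hQ hg ha hab s _)
            (.of_nonneg fun x => upcrossingCapital_nonneg hQ hg ha hab _ _) hchild
      _ ≤ upcrossingCapital Q g a b (upcrossingState Q g a b s t) t :=
          upcrossingCapital_children_le hQ hg ha hab _ t
      _ = upcrossingTest Q g a b s t := (if_pos hst).symm
  · have htop : upcrossingTest Q g a b s t = ⊤ := if_neg hst
    exact htop ▸ le_top

end

lemma upcrossingTest_self (s : List X) : upcrossingTest Q g a b s s = 1 := by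
  simp [upcrossingTest, upcrossingState_self, upcrossingCapital]

section UpcrossingPath

variable {s : List X} {ω : ℕ → X}

lemma upcrossingState_pfx_succ (hω : ω ∈ Gamma s) (k : ℕ) :
    upcrossingState Q g a b s (pfx ω (s.length + (k + 1))) =
      upcrossingStep Q g a b (upcrossingState Q g a b s (pfx ω (s.length + k)))
        (pfx ω (s.length + (k + 1))) := by
  rw [← add_assoc, pfx_succ, upcrossingState_append (prefix_pfx_of_mem_Gamma hω le_self_add)]

lemma monotone_rounds_upcrossingState_pfx (hω : ω ∈ Gamma s) :
    Monotone fun k => (upcrossingState Q g a b s (pfx ω (s.length + k))).rounds :=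
  monotone_nat_of_le_succ fun k => by
    simpa only [upcrossingState_pfx_succ hω k] using rounds_le_rounds_upcrossingStep _ _

lemma upExp_lt_of_upcrossingState_pfx_eq_active (hω : ω ∈ Gamma s) {k m : ℕ} {u : List X}
    (h : upcrossingState Q g a b s (pfx ω (s.length + k)) = .active m u) :
    upExp Q g u < a ∧ ω ∈ Gamma u := by
  induction k with
  | zero =>
    rw [add_zero, (hω : pfx ω s.length = s), upcrossingState_self] at h
    cases h
  | succ k ih =>
    rw [upcrossingState_pfx_succ hω] at h
    rcases upcrossingStep_eq_active h with h | ⟨rfl, hlt⟩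
    · exact ih h
    · exact ⟨hlt, mem_Gamma_pfx ω _⟩

lemma exists_lt_rounds_of_upcrossingState_pfx_eq_active (hω : ω ∈ Gamma s) (hgb : b < g ω)
    {K m : ℕ} {u : List X} (h : upcrossingState Q g a b s (pfx ω (s.length + K)) = .active m u) :
    ∃ K', m < (upcrossingState Q g a b s (pfx ω (s.length + K'))).rounds := by
  obtain ⟨hu, hωu⟩ := upExp_lt_of_upcrossingState_pfx_eq_active hω h
  obtain ⟨N, hN⟩ := eventually_atTop.1 <| eventually_lt_of_lt_liminf <|
    hgb.trans_le (le_liminfP_witnessBelow hu hωu)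
  by_contra! hle
  have hstay : ∀ j, upcrossingState Q g a b s (pfx ω (s.length + (K + j))) = .active m u := by
    intro j
    induction j with
    | zero => exact h
    | succ j ih =>
      have hstep := upcrossingState_pfx_succ (Q := Q) (g := g) (a := a) (b := b) hω (K + j)
      rw [ih] at hstep
      simp only [upcrossingStep] at hstep
      split_ifs at hstep
      · simpa [hstep, UpcrossingState.rounds] using hle (K + j + 1)
      · exact hstep
  have hstep := upcrossingState_pfx_succ (Q := Q) (g := g) (a := a) (b := b) hω (K + N)
  rw [hstay N, upcrossingStep_active_of_le m (hN _ (by omega)).le] at hstep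
  simpa [hstep, UpcrossingState.rounds] using hle (K + N + 1)

lemma exists_upcrossingState_pfx_eq_active (hω : ω ∈ Gamma s)
    (hfreq : ∃ᶠ k in atTop, upExp Q g (pfx ω k) < a) (K : ℕ) :
    ∃ j ≥ K, ∃ m u, upcrossingState Q g a b s (pfx ω (s.length + j)) = .active m u := by
  obtain ⟨k, hk, hlt⟩ := frequently_atTop.1 hfreq (s.length + K + 1)
  obtain ⟨j, rfl⟩ : ∃ j, k = s.length + (j + 1) := ⟨k - s.length - 1, by omega⟩
  cases hj : upcrossingState Q g a b s (pfx ω (s.length + j)) with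
  | active m u => exact ⟨j, by omega, m, u, hj⟩
  | idle m =>
    refine ⟨j + 1, by omega, m, pfx ω (s.length + (j + 1)), ?_⟩
    rw [upcrossingState_pfx_succ hω, hj, upcrossingStep_idle_of_lt m hlt]

lemma tendsto_rounds_upcrossingState_pfx (hω : ω ∈ Gamma s)
    (hfreq : ∃ᶠ k in atTop, upExp Q g (pfx ω k) < a) (hgb : b < g ω) :
    Tendsto (fun k => (upcrossingState Q g a b s (pfx ω (s.length + k))).rounds) atTop atTop := by
  have hmono := monotone_rounds_upcrossingState_pfx (Q := Q) (g := g) (a := a) (b := b) hω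
  refine tendsto_atTop_atTop_of_monotone hmono fun C => ?_
  induction C with
  | zero => exact ⟨0, Nat.zero_le _⟩
  | succ C ih =>
    obtain ⟨K, hK⟩ := ih
    obtain ⟨j, hjK, m, u, hj⟩ := exists_upcrossingState_pfx_eq_active (b := b) hω hfreq K
    obtain ⟨K', hK'⟩ := exists_lt_rounds_of_upcrossingState_pfx_eq_active hω hgb hj
    have hKj : (upcrossingState Q g a b s (pfx ω (s.length + K))).rounds ≤ m := by
      simpa only [hj, UpcrossingState.rounds] using hmono hjK
    exact ⟨K', by omega⟩

lemma tendsto_upcrossingTest_pfx [Fintype X] [Nonempty X] (hQ : ∀ s, IsUpperExpectation (Q s))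
    (hg : ∀ ω, 0 ≤ g ω) (ha : 0 < a) (hab : a < b) (hω : ω ∈ Gamma s)
    (hfreq : ∃ᶠ k in atTop, upExp Q g (pfx ω k) < a) (hgb : b < g ω) :
    Tendsto (fun n => upcrossingTest Q g a b s (pfx ω n)) atTop (𝓝 ⊤) := by
  refine (tendsto_add_atTop_iff_nat s.length).1 ?_
  simp only [add_comm _ s.length]
  have hpow := (tendsto_pow_atTop_atTop_of_one_lt (one_lt_upcrossingFactor ha hab)).comp
    (tendsto_rounds_upcrossingState_pfx hω hfreq hgb)
  refine tendsto_nhds_top_mono (EReal.tendsto_coe_nhds_top_iff.2 (hpow.atTop_div_const two_pos))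
    (Eventually.of_forall fun k => ?_)
  simp only [Function.comp_apply, upcrossingTest,
    if_pos (prefix_pfx_of_mem_Gamma hω (Nat.le_add_right s.length k))]
  exact half_le_upcrossingCapital hQ hg ha hab _ _

end UpcrossingPath

lemma strictlyAS_upcrossing [Fintype X] [Nonempty X] (hQ : ∀ s, IsUpperExpectation (Q s))
    (hg : ∀ ω, 0 ≤ g ω) (ha : 0 < a) (hab : a < b) (s : List X) :
    StrictlyAS Q s {ω | liminf (fun k => upExp Q g (pfx ω k)) atTop < a → g ω ≤ b} := by
  refine ⟨upcrossingTest Q g a b s, isSupermartingale_upcrossingTest hQ hg ha hab s,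
    upcrossingTest_nonneg hQ hg ha hab s, upcrossingTest_self s, fun ω hω hωA => ?_⟩
  simp only [Set.mem_ofPred_eq, Classical.not_imp, not_le] at hωA
  exact tendsto_upcrossingTest_pfx hQ hg ha hab hω (frequently_lt_of_liminf_lt (h := hωA.1)) hωA.2

end Upcrossing

section MonotoneConvergence

variable {X : Type*} [Fintype X] [Nonempty X] {Q : List X → (X → EReal) → EReal}
  (hQ : ∀ s, IsUpperExpectation (Q s))
include hQ

lemma strictlyAS_le_liminf_upExp {g : (ℕ → X) → EReal} (hg : ∀ ω, 0 ≤ g ω) (s : List X) :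
    StrictlyAS Q s {ω | g ω ≤ liminf (fun k => upExp Q g (pfx ω k)) atTop} := by
  let A : ℚ × ℚ → Set (ℕ → X) := fun p => {ω | 0 < (p.1 : ℝ) → (p.1 : ℝ) < p.2 →
    liminf (fun k => upExp Q g (pfx ω k)) atTop < (p.1 : ℝ) → g ω ≤ (p.2 : ℝ)}
  refine (StrictlyAS.iInter hQ (A := A) fun p => ?_).mono fun ω hω => ?_
  · by_cases hp : 0 < (p.1 : ℝ) ∧ (p.1 : ℝ) < p.2
    · exact (strictlyAS_upcrossing hQ hg hp.1 hp.2 s).mono fun ω hω _ _ => hω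
    · exact (strictlyAS_univ hQ s).mono fun ω _ h1 h2 => absurd ⟨h1, h2⟩ hp
  · simp only [A, Set.mem_iInter, Set.mem_ofPred_eq] at hω ⊢
    by_contra! hlt
    have hL0 : 0 ≤ liminf (fun k => upExp Q g (pfx ω k)) atTop :=
      le_liminf_of_le (by isBoundedDefault)
        (Eventually.of_forall fun k => upExp_nonneg hQ fun ω _ => hg ω)
    obtain ⟨a, hLa, hag⟩ := EReal.exists_rat_btwn_of_lt hlt
    obtain ⟨b, hab, hbg⟩ := EReal.exists_rat_btwn_of_lt hag
    exact ((hω (a, b) (by exact_mod_cast hL0.trans_lt hLa) (by exact_mod_cast hab) hLa).trans_lt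
      hbg).false

lemma upExp_iSup_le_iSup_upExp {fs : ℕ → (ℕ → X) → EReal} (hpos : ∀ n ω, 0 ≤ fs n ω)
    (hmono : ∀ n ω, fs n ω ≤ fs (n + 1) ω) (s : List X) :
    upExp Q (fun ω => ⨆ n, fs n ω) s ≤ ⨆ n, upExp Q (fs n) s := by
  refine upExp_le_of_strictlyAS hQ
    (StrictlyAS.iInter hQ fun n => strictlyAS_le_liminf_upExp hQ (hpos n) s)
    (isSupermartingale_iSup hQ (fun n => isSupermartingale_upExp hQ (hpos n))
      (fun n t => upExp_nonneg hQ fun ω _ => hpos n ω) fun n t => upExp_mono fun ω _ => hmono n ω)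
    (.of_nonneg fun t => le_iSup_of_le 0 (upExp_nonneg hQ fun ω _ => hpos 0 ω))
    fun ω _ hω => iSup_le fun n => ?_
  simp only [Set.mem_iInter, Set.mem_ofPred_eq] at hω
  exact (hω n).trans (liminf_le_liminf (Eventually.of_forall fun k =>
    le_iSup (fun n => upExp Q (fs n) (pfx ω k)) n))

lemma tendsto_upExp_of_monotone_of_nonneg {fs : ℕ → (ℕ → X) → EReal} {f : (ℕ → X) → EReal}
    (hpos : ∀ n ω, 0 ≤ fs n ω) (hmono : ∀ n ω, fs n ω ≤ fs (n + 1) ω)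
    (hconv : ∀ ω, Tendsto (fun n => fs n ω) atTop (𝓝 (f ω))) (s : List X) :
    Tendsto (fun n => upExp Q (fs n) s) atTop (𝓝 (upExp Q f s)) := by
  obtain rfl : f = fun ω => ⨆ n, fs n ω := funext fun ω => tendsto_nhds_unique (hconv ω)
    (tendsto_atTop_iSup (monotone_nat_of_le_succ (hmono · ω)))
  have hsup : ⨆ n, upExp Q (fs n) s = upExp Q (fun ω => ⨆ n, fs n ω) s :=
    (iSup_le fun n => upExp_mono fun ω _ => le_iSup (fs · ω) n).antisymm
      (upExp_iSup_le_iSup_upExp hQ hpos hmono s)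
  exact hsup ▸ tendsto_atTop_iSup (monotone_nat_of_le_succ fun n => upExp_mono fun ω _ => hmono n ω)

end MonotoneConvergence

/-- upward monotone convergence of the game-theoretic upper expectation. -/
theorem stmt13 {X : Type*} [Fintype X] [Nonempty X]
    (Q : List X → (X → EReal) → EReal) (hQ : ∀ s : List X, IsUpperExpectation (Q s))
    (s : List X) (fs : ℕ → (ℕ → X) → EReal)
    (hbdd : ∀ n, BddBelowF (fs n))
    (hmono : ∀ n ω, fs n ω ≤ fs (n + 1) ω)
    (f : (ℕ → X) → EReal)
    (hconv : ∀ ω, Tendsto (fun n => fs n ω) atTop (𝓝 (f ω))) :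
    Tendsto (fun n => upExp Q (fs n) s) atTop (𝓝 (upExp Q f s)) := by
  obtain ⟨B, hB⟩ := hbdd 0
  let e := EReal.addCoeOrderIso (-B)
  have hpos : ∀ n ω, 0 ≤ e (fs n ω) := fun n ω => calc
    (0 : EReal) = e B := by rw [EReal.addCoeOrderIso_apply, ← EReal.coe_add, add_neg_cancel]; rfl
    _ ≤ e (fs n ω) := e.monotone ((hB ω).trans (monotone_nat_of_le_succ (hmono · ω) n.zero_le))
  have hshift := tendsto_upExp_of_monotone_of_nonneg hQ hpos (fun n ω => e.monotone (hmono n ω))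
    (fun ω => (e.continuous.tendsto _).comp (hconv ω)) s
  have he : ∀ g : (ℕ → X) → EReal, upExp Q (fun ω => e (g ω)) s = e (upExp Q g s) :=
    fun g => upExp_add_const hQ g (-B) s
  simp only [he] at hshift
  simpa only [Function.comp_def, OrderIso.symm_apply_apply] using
    (e.symm.continuous.tendsto _).comp hshift
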